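/- arXiv:2408.11453 — 3 statements merged into one kernel-verified Lean document; each statement's English description precedes it below -/
import Mathlib

section
/- Let n be a positive integer, X a positive real, α a real number with -1 < α < 0, and ε > 0. Then the sum over positive integers u ≤ X of (u/gcd(u,n))^α is at most C(ε,α) · X^(α+1) · n^ε for some constant C(ε,α) depending only on ε and α. -/
/-!
Group the `u` by `d = gcd u n`, a divisor of `n`: the `u` with gcd `d` are among the `d * v` with
`v ≤ X / d`, so they contribute at most `∑_{v ≤ X} v ^ α`. Concavity of `t ↦ t ^ (α + 1)` gives
`(α + 1) v ^ α ≤ v ^ (α + 1) - (v - 1) ^ (α + 1)`, which telescopes to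
`∑_{v ≤ M} v ^ α ≤ M ^ (α + 1) / (α + 1)`. The sum is thus at most `τ(n) X ^ (α + 1) / (α + 1)`,
and `τ(n) = ∏ (a_p + 1) ≤ C n ^ ε` because `a + 1 ≤ (p ^ ε) ^ a` as soon as `p ^ ε ≥ 2`, while each
of the finitely many primes with `p ^ ε < 2` costs a factor depending only on `ε`.
-/

open Finset

theorem Real.sub_one_rpow_add_mul_rpow_le {α x : ℝ} (hα₁ : -1 ≤ α) (hα₂ : α ≤ 0) (hx : 1 ≤ x) :
    (x - 1) ^ (α + 1) + (α + 1) * x ^ α ≤ x ^ (α + 1) := by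
  have hx0 : 0 < x := by linarith
  have hx_inv : x⁻¹ ≤ 1 := inv_le_one_of_one_le₀ hx
  have bernoulli : (1 + -x⁻¹) ^ (α + 1) ≤ 1 + (α + 1) * -x⁻¹ :=
    rpow_one_add_le_one_add_mul_self (by linarith) (by linarith) (by linarith)
  have hfactor : (x - 1) ^ (α + 1) = x ^ (α + 1) * (1 + -x⁻¹) ^ (α + 1) := by
    rw [← Real.mul_rpow hx0.le (by linarith)]
    congr 1
    field_simp
    ring
  have hpow : x ^ (α + 1) * x⁻¹ = x ^ α := by
    rw [Real.rpow_add hx0, Real.rpow_one]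
    field_simp
  calc (x - 1) ^ (α + 1) + (α + 1) * x ^ α
      ≤ x ^ (α + 1) * (1 + (α + 1) * -x⁻¹) + (α + 1) * x ^ α := by
        rw [hfactor]
        gcongr
    _ = x ^ (α + 1) := by rw [← hpow]; ring

theorem sum_Icc_rpow_le {α : ℝ} (hα₁ : -1 < α) (hα₂ : α ≤ 0) (M : ℕ) :
    ∑ v ∈ Icc 1 M, (v : ℝ) ^ α ≤ (M : ℝ) ^ (α + 1) / (α + 1) := by
  have hβ : 0 < α + 1 := by linarith
  induction M with
  | zero => simp [Real.zero_rpow hβ.ne']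
  | succ M ih =>
    have step := Real.sub_one_rpow_add_mul_rpow_le hα₁.le hα₂ (x := (M + 1 : ℕ)) (by simp)
    rw [le_div_iff₀ hβ] at ih ⊢
    rw [sum_Icc_succ_top (by omega), add_mul]
    push_cast at step ⊢
    rw [add_sub_cancel_right] at step
    linarith

theorem Nat.sum_Icc_filter_dvd_div {M : Type*} [AddCommMonoid M] (g : ℕ → M) (N : ℕ) {d : ℕ}
    (hd : 0 < d) : ∑ u ∈ Icc 1 N with d ∣ u, g (u / d) = ∑ v ∈ Icc 1 (N / d), g v := by
  refine sum_nbij' (· / d) (d * ·) ?_ ?_ ?_ ?_ (fun _ _ => rfl)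
  · simp only [mem_filter, mem_Icc, and_imp]
    intro u hu hN hdu
    exact ⟨Nat.div_pos (Nat.le_of_dvd hu hdu) hd, Nat.div_le_div_right hN⟩
  · simp only [mem_filter, mem_Icc, and_imp]
    intro v hv hN
    refine ⟨⟨Nat.one_le_iff_ne_zero.2 (by positivity), ?_⟩, dvd_mul_right d v⟩
    rw [mul_comm]
    exact (Nat.le_div_iff_mul_le hd).1 hN
  · intro u hu
    exact Nat.mul_div_cancel' (mem_filter.1 hu).2
  · intro v _
    exact Nat.mul_div_cancel_left v hd

theorem sum_Icc_gcd_div_le {g : ℕ → ℝ} (hg : ∀ v, 0 ≤ g v) (N : ℕ) {n : ℕ} (hn : n ≠ 0) :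
    ∑ u ∈ Icc 1 N, g (u / u.gcd n) ≤ ∑ d ∈ n.divisors, ∑ v ∈ Icc 1 (N / d), g v := by
  rw [← sum_fiberwise_of_maps_to (g := fun u => u.gcd n) (t := n.divisors)
    fun u _ => Nat.mem_divisors.2 ⟨Nat.gcd_dvd_right u n, hn⟩]
  refine sum_le_sum fun d hd => ?_
  rw [← Nat.sum_Icc_filter_dvd_div g N (Nat.pos_of_mem_divisors hd)]
  calc ∑ u ∈ Icc 1 N with u.gcd n = d, g (u / u.gcd n)
      = ∑ u ∈ Icc 1 N with u.gcd n = d, g (u / d) :=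
        sum_congr rfl fun u hu => by rw [(mem_filter.1 hu).2]
    _ ≤ ∑ u ∈ Icc 1 N with d ∣ u, g (u / d) :=
        sum_le_sum_of_subset_of_nonneg
          (monotone_filter_right _ fun u _ (hu : u.gcd n = d) => hu ▸ Nat.gcd_dvd_left u n)
          fun _ _ _ => hg _

theorem add_one_le_max_mul_pow {b₀ b : ℝ} (hb₀ : 1 < b₀) (hb : b₀ ≤ b) (a : ℕ) :
    (a + 1 : ℝ) ≤ max 1 (b₀ - 1)⁻¹ * b ^ a := by
  set c := max 1 (b₀ - 1)⁻¹
  have hc : 1 ≤ c := le_max_left _ _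
  have hcb : 1 ≤ c * (b₀ - 1) :=
    calc 1 = (b₀ - 1)⁻¹ * (b₀ - 1) := (inv_mul_cancel₀ (sub_pos.2 hb₀).ne').symm
      _ ≤ c * (b₀ - 1) := by gcongr; exact le_max_right _ _
  have bernoulli : 1 + a * (b₀ - 1) ≤ b ^ a := by
    calc 1 + a * (b₀ - 1) ≤ (1 + (b₀ - 1)) ^ a := one_add_mul_le_pow (by linarith) a
      _ ≤ b ^ a := by gcongr; linarith
  have ha : (0 : ℝ) ≤ a := a.cast_nonneg
  calc (a + 1 : ℝ) ≤ c * (1 + a * (b₀ - 1)) := by nlinarith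
    _ ≤ c * b ^ a := by gcongr

theorem add_one_le_pow_of_two_le {b : ℝ} (hb : 2 ≤ b) (a : ℕ) : (a + 1 : ℝ) ≤ b ^ a :=
  calc (a + 1 : ℝ) ≤ 2 ^ a := by exact_mod_cast Nat.lt_two_pow_self
    _ ≤ b ^ a := by gcongr

theorem Nat.rpow_eq_prod_primeFactors {n : ℕ} (hn : n ≠ 0) (ε : ℝ) :
    (n : ℝ) ^ ε = ∏ p ∈ n.primeFactors, ((p : ℝ) ^ ε) ^ n.factorization p := by
  conv_lhs => rw [← Nat.prod_factorization_pow_eq_self hn]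
  rw [Nat.prod_factorization_eq_prod_primeFactors, Nat.cast_prod,
    ← Real.finsetProd_rpow _ _ fun p _ => by positivity]
  refine prod_congr rfl fun p _ => ?_
  rw [Nat.cast_pow, Real.rpow_pow_comm p.cast_nonneg]

theorem Nat.card_divisors_le_mul_rpow {ε : ℝ} (hε : 0 < ε) :
    ∃ C : ℝ, 0 < C ∧ ∀ n : ℕ, (#n.divisors : ℝ) ≤ C * (n : ℝ) ^ ε := by
  set c := max 1 ((2 : ℝ) ^ ε - 1)⁻¹
  set K := ⌈(2 : ℝ) ^ ε⁻¹⌉₊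
  have hc : 1 ≤ c := le_max_left _ _
  refine ⟨c ^ K, by positivity, fun n => ?_⟩
  rcases eq_or_ne n 0 with rfl | hn
  · simp [Real.zero_rpow hε.ne']
  have hlocal : ∀ p ∈ n.primeFactors, (n.factorization p + 1 : ℝ)
      ≤ (if p < K then c else 1) * ((p : ℝ) ^ ε) ^ n.factorization p := by
    intro p hp
    have hp : (2 : ℝ) ≤ p := by exact_mod_cast (Nat.prime_of_mem_primeFactors hp).two_le
    split_ifs with hpK
    · exact add_one_le_max_mul_pow (Real.one_lt_rpow one_lt_two hε)
        (Real.rpow_le_rpow zero_le_two hp hε.le) _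
    · rw [one_mul]
      refine add_one_le_pow_of_two_le ?_ _
      rw [← Real.rpow_inv_le_iff_of_pos zero_le_two (by positivity) hε]
      exact (Nat.le_ceil _).trans (by exact_mod_cast not_lt.1 hpK)
  have hsmall : ∏ p ∈ n.primeFactors, (if p < K then c else 1) ≤ c ^ K := by
    rw [prod_ite, prod_const, prod_const_one, mul_one]
    refine pow_le_pow_right₀ hc ((card_le_card fun p hp => ?_).trans (card_range K).le)
    exact mem_range.2 (mem_filter.1 hp).2
  calc (#n.divisors : ℝ) = ∏ p ∈ n.primeFactors, (n.factorization p + 1 : ℝ) := by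
        rw [Nat.card_divisors hn]
        push_cast
        rfl
    _ ≤ ∏ p ∈ n.primeFactors, (if p < K then c else 1) * ((p : ℝ) ^ ε) ^ n.factorization p :=
        prod_le_prod (fun _ _ => by positivity) hlocal
    _ = (∏ p ∈ n.primeFactors, (if p < K then c else 1)) * (n : ℝ) ^ ε := by
        rw [prod_mul_distrib, Nat.rpow_eq_prod_primeFactors hn]
    _ ≤ c ^ K * (n : ℝ) ^ ε := by gcongr

theorem gcd_sum_bound (α ε : ℝ) (hα₁ : -1 < α) (hα₂ : α < 0) (hε : 0 < ε) :
    ∃ C : ℝ, 0 < C ∧ ∀ (n : ℕ) (X : ℝ), 0 < n → 0 < X →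
      ∑ u ∈ Finset.Icc 1 ⌊X⌋₊, ((u / Nat.gcd u n : ℕ) : ℝ) ^ α
        ≤ C * X ^ (α + 1) * (n : ℝ) ^ ε := by
  obtain ⟨C, hC, hdiv⟩ := Nat.card_divisors_le_mul_rpow hε
  have hβ : 0 < α + 1 := by linarith
  refine ⟨C / (α + 1), by positivity, fun n X hn hX => ?_⟩
  have hfiber : ∀ d ∈ n.divisors, ∑ v ∈ Icc 1 (⌊X⌋₊ / d), (v : ℝ) ^ α ≤ X ^ (α + 1) / (α + 1) :=
    fun d _ => (sum_Icc_rpow_le hα₁ hα₂.le _).trans <| by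
      gcongr
      exact (Nat.cast_le.2 (Nat.div_le_self _ _)).trans (Nat.floor_le hX.le)
  calc ∑ u ∈ Icc 1 ⌊X⌋₊, ((u / u.gcd n : ℕ) : ℝ) ^ α
      ≤ ∑ d ∈ n.divisors, ∑ v ∈ Icc 1 (⌊X⌋₊ / d), (v : ℝ) ^ α :=
        sum_Icc_gcd_div_le (fun v => Real.rpow_nonneg v.cast_nonneg α) _ hn.ne'
    _ ≤ #n.divisors * (X ^ (α + 1) / (α + 1)) := by
        simpa only [nsmul_eq_mul] using sum_le_card_nsmul _ _ _ hfiber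
    _ ≤ C * n ^ ε * (X ^ (α + 1) / (α + 1)) := by gcongr; exact hdiv n
    _ = C / (α + 1) * X ^ (α + 1) * n ^ ε := by ring
end

section
/- Let K be an algebraically closed field of characteristic zero, b ∈ K nonzero, let l₁,…,l_r be positive integers and γ₁,…,γ_r ∈ K[t] polynomials with ∑_{i=1}^r γᵢ^{lᵢ} = b. Set dᵢ = deg γᵢ. If γ₁^{l₁},…,γ_r^{l_r} are linearly independent over K, then max_{1≤i≤r} dᵢlᵢ ≤ (r−1)(d₁ + ⋯ + d_r) − r(r−1)/2. -/
/-!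
Since the `fⱼ = γⱼ ^ lⱼ` are linearly independent and the characteristic is zero, their Wronskian
`W` is nonzero. Every derivative of order `< r` of `γⱼ ^ lⱼ` is divisible by `γⱼ ^ (lⱼ - r + 1)`,
so `deg W ≥ ∑ⱼ (lⱼ - r + 1) dⱼ`. On the other hand, adding the other rows to row `i` replaces `fᵢ`
by `∑ⱼ fⱼ = b` without changing `W`; as the `k`-th derivative lowers degrees by `k`, expanding the
determinant gives `deg W + r (r - 1) / 2 ≤ ∑_{j ≠ i} lⱼ dⱼ`. Comparing the two bounds gives the
claim.
-/

open Polynomial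

namespace Matrix

variable {n R : Type*} [Fintype n] [DecidableEq n] [CommRing R]

theorem prod_dvd_det_of_forall_dvd (M : Matrix n n R) (p : n → R) (h : ∀ i j, p i ∣ M i j) :
    ∏ i, p i ∣ M.det := by
  choose N hN using h
  have hM : M = diagonal p * of N := by
    ext i j
    rw [mul_apply, Finset.sum_eq_single i
      (fun k _ hk => by rw [diagonal_apply_ne _ hk.symm, zero_mul]) (by simp),
      diagonal_apply_eq, of_apply, hN]
  rw [hM, det_mul, det_diagonal]
  exact dvd_mul_right _ _

theorem natDegree_det_add_le (M : Matrix n n R[X]) (w e : n → ℕ)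
    (h : ∀ i j, M i j ≠ 0 → (M i j).natDegree + w j ≤ e i) (hM : M.det ≠ 0) :
    M.det.natDegree + ∑ j, w j ≤ ∑ i, e i := by
  have hterm : ∀ σ : Equiv.Perm n, ((Equiv.Perm.sign σ : ℤ) : R[X]) * ∏ j, M (σ j) j ≠ 0 →
      (((Equiv.Perm.sign σ : ℤ) : R[X]) * ∏ j, M (σ j) j).natDegree + ∑ j, w j ≤ ∑ i, e i := by
    intro σ hσ
    have hentry : ∀ j, M (σ j) j ≠ 0 := fun j h0 =>
      right_ne_zero_of_mul hσ (Finset.prod_eq_zero (Finset.mem_univ j) h0)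
    calc _ ≤ ∑ j, (M (σ j) j).natDegree + ∑ j, w j := by
          gcongr
          refine natDegree_mul_le.trans ?_
          rw [natDegree_intCast, zero_add]
          exact natDegree_prod_le _ _
      _ ≤ ∑ j, e (σ j) := by
          rw [← Finset.sum_add_distrib]
          exact Finset.sum_le_sum fun j _ => h _ _ (hentry j)
      _ = ∑ i, e i := Equiv.sum_comp σ e
  rw [det_apply'] at hM ⊢
  obtain ⟨σ, -, hσ⟩ := Finset.exists_ne_zero_of_sum_ne_zero hM
  have hwe := (Nat.le_add_left _ _).trans (hterm σ hσ)
  suffices (∑ σ : Equiv.Perm n, ((Equiv.Perm.sign σ : ℤ) : R[X]) * ∏ j, M (σ j) j).natDegree ≤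
      ∑ i, e i - ∑ j, w j by omega
  refine natDegree_sum_le_of_forall_le _ _ fun τ _ => ?_
  by_cases hτ : ((Equiv.Perm.sign τ : ℤ) : R[X]) * ∏ j, M (τ j) j = 0
  · simp [hτ]
  · have := hterm τ hτ
    omega

end Matrix

namespace Polynomial

section CommRing

variable {R : Type*} [CommRing R]

theorem natDegree_iterate_derivative_add_le {p : R[X]} {k : ℕ} (h : derivative^[k] p ≠ 0) :
    (derivative^[k] p).natDegree + k ≤ p.natDegree := by
  have hk : k ≤ p.natDegree := by
    by_contra! hlt
    exact h (iterate_derivative_eq_zero hlt)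
  have := natDegree_iterate_derivative p k
  omega

theorem wronskian_mul_mul (g a b : R[X]) : wronskian (g * a) (g * b) = g ^ 2 * wronskian a b := by
  simp only [wronskian, derivative_mul]
  ring

noncomputable def wronskianMatrix {n : ℕ} (f : Fin n → R[X]) : Matrix (Fin n) (Fin n) R[X] :=
  Matrix.of fun j a => derivative^[a] (f j)

variable {n : ℕ}

theorem wronskianMatrix_update (f : Fin n → R[X]) (i : Fin n) (p : R[X]) :
    wronskianMatrix (Function.update f i p) =
      (wronskianMatrix f).updateRow i fun a => derivative^[a] p := by
  ext j a
  by_cases hj : j = i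
  · subst hj
    simp [wronskianMatrix]
  · simp [wronskianMatrix, hj]

theorem det_wronskianMatrix_update_sum (f : Fin n → R[X]) (i : Fin n) :
    (wronskianMatrix (Function.update f i (∑ j, f j))).det = (wronskianMatrix f).det := by
  have hrow : (fun a : Fin n => derivative^[a] (∑ j, f j)) =
      ∑ j, (1 : Fin n → R[X]) j • wronskianMatrix f j := by
    funext a
    rw [Finset.sum_apply, iterate_derivative_sum]
    simp [wronskianMatrix]
  rw [wronskianMatrix_update, hrow, Matrix.det_updateRow_sum, Pi.one_apply, one_smul]

theorem prod_pow_sub_dvd_det_wronskianMatrix (γ : Fin n → R[X]) (l : Fin n → ℕ) :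
    ∏ j, γ j ^ (l j - (n - 1)) ∣ (wronskianMatrix fun j => γ j ^ l j).det :=
  Matrix.prod_dvd_det_of_forall_dvd _ _ fun j a =>
    (pow_dvd_pow _ (by omega)).trans (pow_sub_dvd_iterate_derivative_pow (γ j) (l j) a)

theorem natDegree_det_wronskianMatrix_add_le (f : Fin n → R[X])
    (hf : (wronskianMatrix f).det ≠ 0) :
    (wronskianMatrix f).det.natDegree + n * (n - 1) / 2 ≤ ∑ j, (f j).natDegree := by
  have hsum : ∑ a : Fin n, (a : ℕ) = n * (n - 1) / 2 := by
    rw [Fin.sum_univ_eq_sum_range (fun a : ℕ => a), Finset.sum_range_id]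
  rw [← hsum]
  exact Matrix.natDegree_det_add_le _ (fun a : Fin n => (a : ℕ)) (fun j => (f j).natDegree)
    (fun _ _ => natDegree_iterate_derivative_add_le) hf

theorem sum_mul_natDegree_le_natDegree_det_wronskianMatrix_add [IsDomain R]
    (γ : Fin n → R[X]) (l : Fin n → ℕ) (hW : (wronskianMatrix fun j => γ j ^ l j).det ≠ 0) :
    ∑ j, l j * (γ j).natDegree ≤
      (wronskianMatrix fun j => γ j ^ l j).det.natDegree + (n - 1) * ∑ j, (γ j).natDegree := by
  have hdvd := prod_pow_sub_dvd_det_wronskianMatrix γ l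
  have hprod := ne_zero_of_dvd_ne_zero hW hdvd
  have hfactor : ∀ j ∈ Finset.univ, γ j ^ (l j - (n - 1)) ≠ 0 := fun j _ =>
    Finset.prod_ne_zero_iff.mp hprod j (Finset.mem_univ j)
  calc ∑ j, l j * (γ j).natDegree
      ≤ ∑ j, (l j - (n - 1)) * (γ j).natDegree + (n - 1) * ∑ j, (γ j).natDegree := by
        rw [Finset.mul_sum, ← Finset.sum_add_distrib]
        exact Finset.sum_le_sum fun j _ => by rw [← add_mul]; gcongr; omega
    _ = (∏ j, γ j ^ (l j - (n - 1))).natDegree + (n - 1) * ∑ j, (γ j).natDegree := by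
        simp only [natDegree_prod _ _ hfactor, natDegree_pow]
    _ ≤ _ := by gcongr; exact natDegree_le_of_dvd hdvd hW

end CommRing

section Field

variable {K : Type*} [Field K] [CharZero K]

theorem exists_eq_C_mul_of_wronskian_eq_zero {u v : K[X]} (hu : u ≠ 0) (h : wronskian u v = 0) :
    ∃ α : K, v = C α * u := by
  classical
  obtain ⟨u₀, v₀, hu₀, hv₀, hunit⟩ := extract_gcd u v
  have hg : gcd u v ≠ 0 := gcd_ne_zero_of_left hu
  set g := gcd u v
  have hw : wronskian u₀ v₀ = 0 := by
    rw [hu₀, hv₀, wronskian_mul_mul] at h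
    exact (mul_eq_zero.mp h).resolve_left (pow_ne_zero 2 hg)
  obtain ⟨hu₀', hv₀'⟩ := ((gcd_isUnit_iff u₀ v₀).mp hunit).wronskian_eq_zero_iff.mp hw
  rw [eq_C_of_derivative_eq_zero hu₀'] at hu₀
  rw [eq_C_of_derivative_eq_zero hv₀'] at hv₀
  have hc : u₀.coeff 0 ≠ 0 := fun h0 => hu (by rw [hu₀, h0, C_0, mul_zero])
  refine ⟨v₀.coeff 0 / u₀.coeff 0, ?_⟩
  rw [hu₀, hv₀, ← mul_assoc, mul_comm (C _), mul_assoc, ← C_mul, div_mul_cancel₀ _ hc]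

theorem _root_.LinearIndependent.eq_zero_of_forall_sum_mul_iterate_derivative_eq_zero
    {n : ℕ} {f : Fin n → K[X]} (hf : LinearIndependent K f) {c : Fin n → K[X]}
    (hc : ∀ a < n, ∑ j, c j * derivative^[a] (f j) = 0) : c = 0 := by
  induction n with
  | zero => exact Subsingleton.elim _ _
  | succ n ih =>
    by_contra hc0
    obtain ⟨k, hk⟩ : ∃ k, c k ≠ 0 := Function.ne_iff.mp hc0
    have hc' : ∀ a < n, ∑ j, derivative (c j) * derivative^[a] (f j) = 0 := by
      intro a ha
      have hd := congrArg derivative (hc a (by omega))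
      simp only [derivative_sum, derivative_mul, Finset.sum_add_distrib, derivative_zero,
        ← Function.iterate_succ_apply' derivative, hc (a + 1) (by omega), add_zero] at hd
      exact hd
    -- The Wronskians `W(c k, c j)` give a relation with one derivative fewer and no `k`-th term.
    have hW : ∀ a < n, ∑ j, wronskian (c k) (c j) * derivative^[a] (f j) = 0 := by
      intro a ha
      simp only [wronskian, sub_mul, mul_assoc, Finset.sum_sub_distrib, ← Finset.mul_sum,
        hc' a ha, hc a (by omega), mul_zero, sub_zero]
    have hWk := ih (hf.comp _ (Fin.succAbove_right_injective (p := k)))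
      (c := fun j => wronskian (c k) (c (k.succAbove j))) fun a ha => by
        rw [← hW a ha, Fin.sum_univ_succAbove _ k, wronskian_self_eq_zero, zero_mul, zero_add]
        rfl
    have hW0 : ∀ j, wronskian (c k) (c j) = 0 := by
      intro j
      rcases eq_or_ne j k with rfl | hj
      · exact wronskian_self_eq_zero _
      · obtain ⟨j', rfl⟩ := Fin.exists_succAbove_eq hj
        exact congrFun hWk j'
    choose α hα using fun j => exists_eq_C_mul_of_wronskian_eq_zero hk (hW0 j)
    have hrel : ∑ j, α j • f j = 0 := by
      have h0 : c k * ∑ j, α j • f j = 0 := by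
        rw [← hc 0 (Nat.succ_pos n), Finset.mul_sum]
        refine Finset.sum_congr rfl fun j _ => ?_
        rw [hα j, smul_eq_C_mul, Function.iterate_zero_apply]
        ring
      exact (mul_eq_zero.mp h0).resolve_left hk
    have hαk := Fintype.linearIndependent_iff.mp hf α hrel k
    exact hk (by rw [hα k, hαk, C_0, zero_mul])

theorem det_wronskianMatrix_ne_zero {n : ℕ} {f : Fin n → K[X]} (hf : LinearIndependent K f) :
    (wronskianMatrix f).det ≠ 0 := by
  rw [Ne, ← Matrix.exists_vecMul_eq_zero_iff]
  rintro ⟨c, hc0, hc⟩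
  refine hc0 (hf.eq_zero_of_forall_sum_mul_iterate_derivative_eq_zero fun a ha => ?_)
  simpa [Matrix.vecMul, dotProduct, wronskianMatrix] using congrFun hc ⟨a, ha⟩

end Field

end Polynomial

theorem wronskian_degree_bound_general
    {K : Type*} [Field K] [CharZero K]
    (r : ℕ)
    (b : K)
    (l : Fin r → ℕ)
    (γ : Fin r → K[X])
    (hsum : ∑ i, γ i ^ l i = C b)
    (hind : LinearIndependent K (fun i => γ i ^ l i)) :
    ∀ i, ((γ i).natDegree * l i : ℤ) ≤
      (r - 1 : ℤ) * (∑ j, ((γ j).natDegree : ℤ)) - (r * (r - 1) : ℤ) / 2 := by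
  intro i
  obtain ⟨m, rfl⟩ : ∃ m, r = m + 1 := ⟨r - 1, by have := i.pos; omega⟩
  set f : Fin (m + 1) → K[X] := fun j => γ j ^ l j
  have hW : (wronskianMatrix f).det ≠ 0 := det_wronskianMatrix_ne_zero hind
  have hWb : (wronskianMatrix (Function.update f i (C b))).det = (wronskianMatrix f).det := by
    rw [← hsum, det_wronskianMatrix_update_sum]
  have hlow := sum_mul_natDegree_le_natDegree_det_wronskianMatrix_add γ l hW
  have hup := natDegree_det_wronskianMatrix_add_le _ (hWb ▸ hW)
  have hupdate : ∑ j, (Function.update f i (C b) j).natDegree + (f i).natDegree =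
      ∑ j, (f j).natDegree := by
    simp_rw [Function.apply_update (fun _ => natDegree),
      Finset.sum_update_of_mem (Finset.mem_univ i), natDegree_C, zero_add, add_comm,
      Finset.sum_eq_add_sum_sdiff_singleton_of_mem (Finset.mem_univ i) fun j => (f j).natDegree]
  simp only [f, natDegree_pow, Nat.add_sub_cancel, hWb] at hupdate hlow hup
  have key : (γ i).natDegree * l i + (m + 1) * m / 2 ≤ m * ∑ j, (γ j).natDegree := by
    linarith
  have hhalf : ((m + 1 : ℕ) * ((m + 1 : ℕ) - 1) : ℤ) / 2 = (((m + 1) * m / 2 : ℕ) : ℤ) := by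
    push_cast
    ring_nf
  rw [hhalf]
  push_cast at key ⊢
  linarith

theorem wronskian_degree_bound
    {K : Type*} [Field K] [IsAlgClosed K] [CharZero K]
    (r : ℕ) (hr : 0 < r)
    (b : K) (hb : b ≠ 0)
    (l : Fin r → ℕ) (hl : ∀ i, 0 < l i)
    (γ : Fin r → K[X])
    (hsum : ∑ i, γ i ^ l i = C b)
    (hind : LinearIndependent K (fun i => γ i ^ l i)) :
    ∀ i, ((γ i).natDegree * l i : ℤ) ≤
      (r - 1 : ℤ) * (∑ j, ((γ j).natDegree : ℤ)) - (r * (r - 1) : ℤ) / 2 :=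
  wronskian_degree_bound_general r b l γ hsum hind
end

section
/- Let K be an algebraically closed field of characteristic zero and γ₂, γ₃ ∈ K[t] with l, m integers satisfying l > m ≥ 2, deg γ₂ ≤ 2, deg γ₃ ≤ 2, at least one of γ₂, γ₃ nonconstant, and γ₂^l, γ₃^m linearly independent over K. Then there is no b ∈ K \ {0} with γ₂(t)^l + γ₃(t)^m = b. -/
/-!
The polynomial Fermat–Catalan theorem (Mason–Stothers) applies to
`γ₂ ^ l + γ₃ ^ m + (-b) * 1 ^ r = 0`: the constant third term may carry any exponent `r`, and
`r = l * m` meets the condition `1/l + 1/m + 1/r ≤ 1` as soon as `l ≥ 3` and `m ≥ 2`.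
So both polynomials are constant.
-/

open Polynomial

namespace Polynomial

variable {K : Type*} [Field K]

lemma natDegree_eq_zero_of_pow_eq_C {p : K[X]} {n : ℕ} {b : K} (hn : n ≠ 0) (h : p ^ n = C b) :
    p.natDegree = 0 := by
  have hdeg := congrArg natDegree h
  rw [natDegree_pow, natDegree_C] at hdeg
  exact (mul_eq_zero.mp hdeg).resolve_left hn

lemma natDegree_eq_zero_of_pow_add_pow_eq_C [CharZero K] {p q : K[X]} {l m : ℕ} {b : K}
    (hl : 3 ≤ l) (hm : 2 ≤ m) (hb : b ≠ 0) (h : p ^ l + q ^ m = C b) :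
    p.natDegree = 0 ∧ q.natDegree = 0 := by
  rcases eq_or_ne p 0 with rfl | hp
  · rw [zero_pow (by omega), zero_add] at h
    exact ⟨natDegree_zero, natDegree_eq_zero_of_pow_eq_C (by omega) h⟩
  rcases eq_or_ne q 0 with rfl | hq
  · rw [zero_pow (by omega), add_zero] at h
    exact ⟨natDegree_eq_zero_of_pow_eq_C (by omega) h, natDegree_zero⟩
  have hcop : IsCoprime (p ^ l) (q ^ m) :=
    ⟨C b⁻¹, C b⁻¹, by rw [← mul_add, h, ← C_mul, inv_mul_cancel₀ hb, C_1]⟩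
  rw [IsCoprime.pow_iff (by omega) (by omega)] at hcop
  have hsum : C 1 * p ^ l + C 1 * q ^ m + C (-b) * 1 ^ (l * m) = 0 := by
    rw [C_1, C_neg, one_pow]; linear_combination h
  have hexp : m * (l * m) + l * m * l + l * m ≤ l * m * (l * m) := by
    have hlm : l + m + 1 ≤ l * m := by nlinarith
    calc m * (l * m) + l * m * l + l * m = l * m * (l + m + 1) := by ring
      _ ≤ l * m * (l * m) := by gcongr
  obtain ⟨hp₀, hq₀, -⟩ := flt_catalan (by omega) (by omega) (by positivity) hexp
    (by norm_cast; omega) (by norm_cast; omega) (by norm_cast; positivity) hp hq one_ne_zero hcop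
    one_ne_zero one_ne_zero (neg_ne_zero.mpr hb) hsum
  exact ⟨hp₀, hq₀⟩

end Polynomial

theorem no_constant_sum_two_powers_general
    {K : Type*} [Field K] [CharZero K]
    (l m : ℕ) (hm : 2 ≤ m) (hlm : m < l)
    (γ₂ γ₃ : K[X])
    (hnc : 0 < γ₂.natDegree ∨ 0 < γ₃.natDegree) :
    ¬ ∃ b : K, b ≠ 0 ∧ γ₂ ^ l + γ₃ ^ m = C b := by
  rintro ⟨b, hb, h⟩
  obtain ⟨h₂, h₃⟩ := natDegree_eq_zero_of_pow_add_pow_eq_C (by omega) hm hb h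
  omega

theorem no_constant_sum_two_powers
    {K : Type*} [Field K] [IsAlgClosed K] [CharZero K]
    (l m : ℕ) (hm : 2 ≤ m) (hlm : m < l)
    (γ₂ γ₃ : K[X]) (hd₂ : γ₂.natDegree ≤ 2) (hd₃ : γ₃.natDegree ≤ 2)
    (hnc : 0 < γ₂.natDegree ∨ 0 < γ₃.natDegree)
    (hind : LinearIndependent K ![γ₂ ^ l, γ₃ ^ m]) :
    ¬ ∃ b : K, b ≠ 0 ∧ γ₂ ^ l + γ₃ ^ m = C b :=
  no_constant_sum_two_powers_general l m hm hlm γ₂ γ₃ hnc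
end
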